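/- For every i ∈ ℤ, the shortest dependent path with source i, namely the path (i, a_i + b_i), has grade 2. -/

import Mathlib

/-- Paths of the quiver `ℤ` (arrows `i → i - 1`) are pairs `(source, length)`;
`p` is a subpath of `q` iff the source of `p` is at most that of `q` and the
target of `q` is at most that of `p`. -/
def ZIsSubpath (p q : ℤ × ℕ) : Prop :=
  p.1 ≤ q.1 ∧ q.1 - (q.2 : ℤ) ≤ p.1 - (p.2 : ℤ)

/-- Proper subpath: a subpath that is not the whole path. -/
def ZIsProperSubpath (p q : ℤ × ℕ) : Prop :=
  ZIsSubpath p q ∧ p ≠ q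

/-- A path is factorisable (w.r.t. the factorisable vertices, i.e. the values
of `x`) if both its source and its target are factorisable vertices. -/
def IsFactorisable (x : ℤ → ℤ) (p : ℤ × ℕ) : Prop :=
  (∃ s : ℤ, x s = p.1) ∧ ∃ s : ℤ, x s = p.1 - (p.2 : ℤ)

/-- The grade of the path `(i, ℓ)` is `m i - m (i - ℓ)`, where
`m t = max {s : x s ≤ t}`. -/
def pathGrade (m : ℤ → ℤ) (p : ℤ × ℕ) : ℤ :=
  m p.1 - m (p.1 - (p.2 : ℤ))

/-!
Let `s = m i`, so that `x s ≤ i < x (s + 1)`, and let `P k` be the factorisable path from `x k`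
to `x (k - 2)`; it has grade 2, so it lies in `C` and is maximal in `N`. A path from `i` of
grade at most 1 is a proper subpath of `P (s + 1)`: it lies in `N` but not in `C`. A path from
`i` in `N` ending at or below `x (s - 2)` contains `P s`, so by maximality it is `P s`. The
first fact bounds the grade of `(i, a i + b i)` from below, the second from above, according to
whether `b i` is `0` or `1`.
-/

def gradeTwoPath (x : ℤ → ℤ) (k : ℤ) : ℤ × ℕ := (x k, (x k - x (k - 2)).toNat)

section

variable {x m : ℤ → ℤ}

lemma galoisConnection_of_isGreatest (hx : Monotone x)
    (hm : ∀ t : ℤ, x (m t) ≤ t ∧ ∀ s : ℤ, x s ≤ t → s ≤ m t) : GaloisConnection x m :=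
  fun k t => ⟨(hm t).2 k, fun h => (hx h).trans (hm t).1⟩

lemma GaloisConnection.u_l_eq_of_strictMono (gc : GaloisConnection x m) (hx : StrictMono x)
    (k : ℤ) : m (x k) = k := by
  have := gc.lt_iff_lt.mp (hx (lt_add_one k))
  have := gc.le_u_l k
  omega

lemma gradeTwoPath_target (hx : Monotone x) (k : ℤ) :
    (gradeTwoPath x k).1 - ((gradeTwoPath x k).2 : ℤ) = x (k - 2) := by
  have := hx (show k - 2 ≤ k by omega)
  simp only [gradeTwoPath]
  omega

lemma isFactorisable_gradeTwoPath (hx : Monotone x) (k : ℤ) :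
    IsFactorisable x (gradeTwoPath x k) :=
  ⟨⟨k, rfl⟩, ⟨k - 2, (gradeTwoPath_target hx k).symm⟩⟩

lemma pathGrade_gradeTwoPath (hx : StrictMono x) (gc : GaloisConnection x m) (k : ℤ) :
    pathGrade m (gradeTwoPath x k) = 2 := by
  rw [pathGrade, gradeTwoPath_target hx.monotone, gradeTwoPath, gc.u_l_eq_of_strictMono hx,
    gc.u_l_eq_of_strictMono hx]
  ring

lemma pathGrade_le_two_iff (gc : GaloisConnection x m) (i : ℤ) (ℓ : ℕ) :
    pathGrade m (i, ℓ) ≤ 2 ↔ x (m i - 2) ≤ i - ℓ := by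
  rw [gc]
  simp only [pathGrade]
  omega

lemma zIsSubpath_gradeTwoPath_of_target_le (hx : Monotone x) (gc : GaloisConnection x m)
    {i : ℤ} {ℓ : ℕ} (h : i - ℓ ≤ x (m i - 2)) : ZIsSubpath (gradeTwoPath x (m i)) (i, ℓ) :=
  ⟨gc.l_u_le i, (gradeTwoPath_target hx _).symm ▸ h⟩

lemma zIsProperSubpath_gradeTwoPath_of_pathGrade_lt_two (hx : Monotone x)
    (gc : GaloisConnection x m) {i : ℤ} {ℓ : ℕ} (h : pathGrade m (i, ℓ) < 2) :
    ZIsProperSubpath (i, ℓ) (gradeTwoPath x (m i + 1)) := by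
  have hi : i < x (m i + 1) := gc.lt_iff_lt.mpr (lt_add_one _)
  have htarget : x (m i - 1) ≤ i - ℓ := by
    rw [gc]
    simp only [pathGrade] at h
    omega
  refine ⟨⟨hi.le, ?_⟩, fun heq => hi.ne (congrArg Prod.fst heq)⟩
  rw [gradeTwoPath_target hx, show m i + 1 - 2 = m i - 1 by ring]
  exact htarget

variable {N C : Set (ℤ × ℕ)}

lemma eq_gradeTwoPath_of_target_le (hx : Monotone x) (gc : GaloisConnection x m)
    {i : ℤ} (hCmax : ∀ p ∈ C, ∀ q ∈ N, ZIsSubpath p q → p = q)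
    (hP : gradeTwoPath x (m i) ∈ C)
    {ℓ : ℕ} (hℓ : (i, ℓ) ∈ N) (h : i - ℓ ≤ x (m i - 2)) : (i, ℓ) = gradeTwoPath x (m i) :=
  (hCmax _ hP _ hℓ (zIsSubpath_gradeTwoPath_of_target_le hx gc h)).symm

lemma pathGrade_le_two_of_mem (hx : Monotone x) (gc : GaloisConnection x m)
    {i : ℤ} (hCmax : ∀ p ∈ C, ∀ q ∈ N, ZIsSubpath p q → p = q)
    (hP : gradeTwoPath x (m i) ∈ C)
    {ℓ : ℕ} (hℓ : (i, ℓ) ∈ N) : pathGrade m (i, ℓ) ≤ 2 := by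
  rw [pathGrade_le_two_iff gc]
  by_contra! h
  have heq := congrArg (fun p : ℤ × ℕ => p.1 - (p.2 : ℤ))
    (eq_gradeTwoPath_of_target_le hx gc hCmax hP hℓ h.le)
  simp only [gradeTwoPath_target hx] at heq
  omega

end

theorem shortest_dependent_path_grade_two_general (x m : ℤ → ℤ) (hx : StrictMono x)
    (hm : ∀ t : ℤ, x (m t) ≤ t ∧ ∀ s : ℤ, x s ≤ t → s ≤ m t)
    (N : Set (ℤ × ℕ))
    (hNdown : ∀ p q : ℤ × ℕ, ZIsSubpath p q → q ∈ N → p ∈ N)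
    (C : Set (ℤ × ℕ)) (hCN : C ⊆ N)
    (hCmax : ∀ p ∈ C, ∀ q ∈ N, ZIsSubpath p q → p = q)
    (hC2 : ∀ p : ℤ × ℕ, IsFactorisable x p → pathGrade m p = 2 → p ∈ C)
    (a b : ℤ → ℕ)
    (ha : ∀ i : ℤ, (i, a i) ∈ N ∧ ∀ ℓ : ℕ, (i, ℓ) ∈ N → ℓ ≤ a i)
    (hb : ∀ i : ℤ, (b i = 0 ∧ ∃ ℓ : ℕ, (i, ℓ) ∈ C) ∨ (b i = 1 ∧ ¬ ∃ ℓ : ℕ, (i, ℓ) ∈ C)) :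
    ∀ i : ℤ, pathGrade m (i, a i + b i) = 2 := by
  intro i
  have gc := galoisConnection_of_isGreatest hx.monotone hm
  have hP (k : ℤ) : gradeTwoPath x k ∈ C :=
    hC2 _ (isFactorisable_gradeTwoPath hx.monotone k) (pathGrade_gradeTwoPath hx gc k)
  have hlow {ℓ : ℕ} (h : pathGrade m (i, ℓ) < 2) :
      ZIsProperSubpath (i, ℓ) (gradeTwoPath x (m i + 1)) :=
    zIsProperSubpath_gradeTwoPath_of_pathGrade_lt_two hx.monotone gc h
  rcases hb i with ⟨hb0, ℓ, hℓ⟩ | ⟨hb1, hnC⟩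
  · have hsub : ZIsSubpath (i, ℓ) (i, a i) := by
      have := (ha i).2 ℓ (hCN hℓ)
      exact ⟨le_rfl, show i - (a i : ℤ) ≤ i - ℓ by omega⟩
    have hC : (i, a i) ∈ C := hCmax _ hℓ _ (ha i).1 hsub ▸ hℓ
    rw [hb0, add_zero]
    refine le_antisymm (pathGrade_le_two_of_mem hx.monotone gc hCmax (hP _) (ha i).1) ?_
    by_contra! h
    exact (hlow h).2 (hCmax _ hC _ (hCN (hP _)) (hlow h).1)
  · rw [hb1]
    refine le_antisymm ?_ ?_
    · rw [pathGrade_le_two_iff gc]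
      by_contra! h
      have := eq_gradeTwoPath_of_target_le hx.monotone gc hCmax (hP _) (ha i).1 (by omega)
      exact hnC ⟨a i, this ▸ hP _⟩
    · by_contra! h
      have := (ha i).2 _ (hNdown _ _ (hlow h).1 (hCN (hP _)))
      omega

/-- **Shortest dependent paths have grade 2.** For every `i`, the path
`(i, a i + b i)` has grade 2. -/
theorem shortest_dependent_path_grade_two (x m : ℤ → ℤ) (hx : StrictMono x)
    (hm : ∀ t : ℤ, x (m t) ≤ t ∧ ∀ s : ℤ, x s ≤ t → s ≤ m t)
    (N : Set (ℤ × ℕ))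
    (hN0 : ∀ i : ℤ, (i, 0) ∈ N)
    (hNdown : ∀ p q : ℤ × ℕ, ZIsSubpath p q → q ∈ N → p ∈ N)
    (hNbdd : ∃ B : ℕ, ∀ p ∈ N, p.2 ≤ B)
    (C : Set (ℤ × ℕ)) (hCN : C ⊆ N)
    (hCanti : ∀ p ∈ C, ∀ q ∈ C, ZIsSubpath p q → p = q)
    (hCmax : ∀ p ∈ C, ∀ q ∈ N, ZIsSubpath p q → p = q)
    (hC2 : ∀ p : ℤ × ℕ, IsFactorisable x p → pathGrade m p = 2 → p ∈ C)
    (a b : ℤ → ℕ)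
    (ha : ∀ i : ℤ, (i, a i) ∈ N ∧ ∀ ℓ : ℕ, (i, ℓ) ∈ N → ℓ ≤ a i)
    (hb : ∀ i : ℤ, (b i = 0 ∧ ∃ ℓ : ℕ, (i, ℓ) ∈ C) ∨ (b i = 1 ∧ ¬ ∃ ℓ : ℕ, (i, ℓ) ∈ C)) :
    ∀ i : ℤ, pathGrade m (i, a i + b i) = 2 :=
  shortest_dependent_path_grade_two_general x m hx hm N hNdown C hCN hCmax hC2 a b ha hb
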